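/- For the point-null example with z fixed and α ∈ (0,1) fixed, there exists N such that for all n ≥ N, α lies strictly inside the incredibility interval [p₁(n)Φ(−zsqrt(n/(1+n))), p₁(n)Φ(−z sqrt(n/(1+n))) + p₀(n)], i.e., no conventional one-sided (1−α) credible interval endpoint exists for large n. -/

import Mathlib

/-
As `n → ∞` the Bayes factor `BF₀₁ = √(1+n) exp(−nz²/(2(1+n)))` is at least
`exp(−z²/2) √(1+n)`, so it diverges and `p₀(n) = BF₀₁/(1+BF₀₁) → 1`. Since `Φ` takes values
in `[0, 1]`, the lower endpoint `p₁Φ` is at most `p₁ = 1 − p₀ → 0` and the upper endpoint is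
at least `p₀ → 1`; once `p₀ > max α (1 − α)` the interval contains `α` in its interior.
-/

open MeasureTheory Filter

noncomputable def Phi (t : ℝ) : ℝ :=
  ∫ x in Set.Iic t, (Real.sqrt (2 * Real.pi))⁻¹ * Real.exp (-(x ^ 2) / 2)

lemma gaussianPDF_eq (x : ℝ) :
    (Real.sqrt (2 * Real.pi))⁻¹ * Real.exp (-(x ^ 2) / 2)
      = (Real.sqrt (2 * Real.pi))⁻¹ * Real.exp (-(1 / 2) * x ^ 2) := by
  ring_nf

lemma integrable_gaussianPDF :
    Integrable (fun x : ℝ => (Real.sqrt (2 * Real.pi))⁻¹ * Real.exp (-(x ^ 2) / 2)) := by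
  simp only [gaussianPDF_eq]
  exact (integrable_exp_neg_mul_sq (by norm_num)).const_mul _

lemma integral_gaussianPDF :
    ∫ x : ℝ, (Real.sqrt (2 * Real.pi))⁻¹ * Real.exp (-(x ^ 2) / 2) = 1 := by
  simp only [gaussianPDF_eq]
  rw [integral_const_mul, integral_gaussian, div_div_eq_mul_div, div_one, mul_comm 2,
    inv_mul_cancel₀]
  positivity

lemma Phi_nonneg (t : ℝ) : 0 ≤ Phi t :=
  setIntegral_nonneg measurableSet_Iic fun _ _ => by positivity

lemma Phi_le_one (t : ℝ) : Phi t ≤ 1 :=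
  integral_gaussianPDF ▸
    setIntegral_le_integral integrable_gaussianPDF (Eventually.of_forall fun _ => by positivity)

lemma tendsto_bayesFactor_atTop (z : ℝ) :
    Tendsto (fun n : ℕ => Real.sqrt (1 + n) * Real.exp (-(n * z ^ 2) / (2 * (1 + n))))
      atTop atTop := by
  have hsqrt : Tendsto (fun n : ℕ => Real.sqrt (1 + n)) atTop atTop :=
    Real.tendsto_sqrt_atTop.comp
      (tendsto_atTop_add_const_left _ 1 tendsto_natCast_atTop_atTop)
  refine tendsto_atTop_mono (fun n => ?_) (hsqrt.const_mul_atTop (Real.exp_pos (-(z ^ 2) / 2)))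
  have hexponent : -(z ^ 2) / 2 ≤ -(n * z ^ 2) / (2 * (1 + n)) := by
    rw [div_le_div_iff₀ two_pos (by positivity)]
    nlinarith [sq_nonneg z]
  rw [mul_comm]
  gcongr

lemma tendsto_div_one_add_self {ι : Type*} {l : Filter ι} {f : ι → ℝ}
    (hf : Tendsto f l atTop) : Tendsto (fun i => f i / (1 + f i)) l (nhds 1) := by
  have hlim : Tendsto (fun i => 1 - (1 + f i)⁻¹) l (nhds (1 - 0)) :=
    tendsto_const_nhds.sub (tendsto_atTop_add_const_left _ 1 hf).inv_tendsto_atTop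
  rw [sub_zero] at hlim
  refine hlim.congr' ((hf.eventually_gt_atTop 0).mono fun i hi => ?_)
  field_simp
  ring

lemma mem_incredibilityInterval {α p φ : ℝ} (hp : max α (1 - α) < p) (hp1 : p ≤ 1)
    (hφ0 : 0 ≤ φ) (hφ1 : φ ≤ 1) : (1 - p) * φ < α ∧ α < (1 - p) * φ + p := by
  rw [max_lt_iff] at hp
  constructor <;> nlinarith

theorem stmt_14_general (z : ℝ) (α : ℝ) (hα : 0 < α) (hα' : α < 1)
    (B p0 p1 : ℕ → ℝ)
    (hB : ∀ n, B n = Real.sqrt (1 + n) * Real.exp (-(n * z ^ 2) / (2 * (1 + n))))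
    (hp0 : ∀ n, p0 n = B n / (1 + B n)) (hp1 : ∀ n, p1 n = 1 - p0 n) :
    ∃ N : ℕ, ∀ n ≥ N,
      p1 n * Phi (-(z * Real.sqrt (n / (1 + n)))) < α ∧
      α < p1 n * Phi (-(z * Real.sqrt (n / (1 + n)))) + p0 n := by
  have hB_nonneg : ∀ n, 0 ≤ B n := fun n => hB n ▸ by positivity
  have hp0_le_one : ∀ n, p0 n ≤ 1 := fun n => by
    rw [hp0 n, div_le_one (by linarith [hB_nonneg n])]
    linarith
  have hp0_tendsto : Tendsto p0 atTop (nhds 1) := by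
    simpa only [← hp0, ← hB] using tendsto_div_one_add_self (tendsto_bayesFactor_atTop z)
  obtain ⟨N, hN⟩ := eventually_atTop.1 <|
    hp0_tendsto.eventually (eventually_gt_nhds (max_lt hα' (by linarith : 1 - α < 1)))
  refine ⟨N, fun n hn => ?_⟩
  rw [hp1 n]
  exact mem_incredibilityInterval (hN n hn) (hp0_le_one n) (Phi_nonneg _) (Phi_le_one _)

/-- Point-null example with `z ≠ 0` and `α ∈ (0,1)` fixed: for all large `n`, `α`
lies strictly inside the incredibility interval
`[p₁(n)Φ(−z√(n/(1+n))), p₁(n)Φ(−z√(n/(1+n))) + p₀(n)]`, where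
`p₀(n) = BF₀₁/(1+BF₀₁)`, `BF₀₁ = √(1+n)exp(−nz²/(2(1+n)))`, `p₁(n) = 1 − p₀(n)`;
hence no conventional one-sided `(1−α)` credible-interval endpoint exists. -/
theorem stmt_14 (z : ℝ) (hz : z ≠ 0) (α : ℝ) (hα : 0 < α) (hα' : α < 1)
    (B p0 p1 : ℕ → ℝ)
    (hB : ∀ n, B n = Real.sqrt (1 + n) * Real.exp (-(n * z ^ 2) / (2 * (1 + n))))
    (hp0 : ∀ n, p0 n = B n / (1 + B n)) (hp1 : ∀ n, p1 n = 1 - p0 n) :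
    ∃ N : ℕ, ∀ n ≥ N,
      p1 n * Phi (-(z * Real.sqrt (n / (1 + n)))) < α ∧
      α < p1 n * Phi (-(z * Real.sqrt (n / (1 + n)))) + p0 n :=
  stmt_14_general z α hα hα' B p0 p1 hB hp0 hp1
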